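/- arXiv:2412.07118 — 3 statements merged into one kernel-verified Lean document; each statement's English description precedes it below -/
import Mathlib

section
/- The space Q_1^{*,-}Λ^{k+1} admits the decomposition Q_1^{*,-}Λ^{k+1} = N(δ_{k+1}, Q_1^{*,-}Λ^{k+1}) ⊕ κ^δ(R(δ_{k+1}, Q_1^{*,-}Λ^{k+1})), where κ^δ := ⋆ ∘ κ ∘ ⋆. -/
open MvPolynomial Finset MeasureTheory

/-- Strictly increasing `k`-indices in `{1,…,n}`, modelled as `k`-element subsets of `Fin n`. -/
abbrev Idx (n k : ℕ) := {s : Finset (Fin n) // s.card = k}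

/-- A differential `k`-form with polynomial coefficients on `ℝⁿ`:
one polynomial coefficient for each increasing `k`-index. -/
abbrev Form (n k : ℕ) := Idx n k → MvPolynomial (Fin n) ℝ

/-- The sign `(-1)^{#\{j ∈ s : j < i\}}`. -/
noncomputable def sgn {n : ℕ} (s : Finset (Fin n)) (i : Fin n) : ℝ :=
  (-1) ^ (s.filter (· < i)).card

def eraseIdx {n k : ℕ} (s : Idx n (k+1)) {i : Fin n} (hi : i ∈ s.1) : Idx n k :=
  ⟨s.1.erase i, by simp [Finset.card_erase_of_mem hi, s.2]⟩

def insertIdx {n k : ℕ} (s : Idx n k) {i : Fin n} (hi : i ∉ s.1) : Idx n (k+1) :=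
  ⟨insert i s.1, by simp [Finset.card_insert_of_notMem hi, s.2]⟩

/-- The exterior derivative `d^k`. -/
noncomputable def extd (n k : ℕ) : Form n k →ₗ[ℝ] Form n (k+1) where
  toFun ω := fun s => ∑ i ∈ s.1.attach, sgn s.1 i.1 • pderiv i.1 (ω (eraseIdx s i.2))
  map_add' ω η := by
    funext s
    simp [Finset.sum_add_distrib, smul_add]
  map_smul' c ω := by
    funext s
    simp only [Pi.smul_apply, RingHom.id_apply]
    rw [Finset.smul_sum]
    exact Finset.sum_congr rfl (fun i _ => by rw [(pderiv i.1).map_smul, smul_comm])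

/-- The Koszul operator `κ` (contraction with the position vector field). -/
noncomputable def koszul (n k : ℕ) : Form n (k+1) →ₗ[ℝ] Form n k where
  toFun ω := fun s =>
    ∑ i ∈ (s.1ᶜ).attach, sgn s.1 i.1 • (X i.1 * ω (insertIdx s (Finset.mem_compl.mp i.2)))
  map_add' ω η := by
    funext s
    simp [Finset.sum_add_distrib, mul_add, smul_add]
  map_smul' c ω := by
    funext s
    simp only [Pi.smul_apply, RingHom.id_apply, mul_smul_comm]
    rw [Finset.smul_sum]
    exact Finset.sum_congr rfl (fun i _ => (smul_comm _ _ _))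

/-- The codifferential `δ_{k+1}` (the formal adjoint of `d^k` on Euclidean `ℝⁿ`,
which coincides with `(-1)^{(k+1)n} ⋆ d^{n-k-1} ⋆`). -/
noncomputable def codiff (n k : ℕ) : Form n (k+1) →ₗ[ℝ] Form n k where
  toFun ω := fun s =>
    -∑ i ∈ (s.1ᶜ).attach, sgn s.1 i.1 • pderiv i.1 (ω (insertIdx s (Finset.mem_compl.mp i.2)))
  map_add' ω η := by
    funext s
    simp [Finset.sum_add_distrib, smul_add]
    ring
  map_smul' c ω := by
    funext s
    simp only [Pi.smul_apply, RingHom.id_apply, smul_neg, neg_inj]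
    rw [Finset.smul_sum]
    exact Finset.sum_congr rfl (fun i _ => by rw [(pderiv i.1).map_smul, smul_comm])

/-- The operator `κ^δ = ⋆ ∘ κ ∘ ⋆` (exterior multiplication by `Σ xᵢ dxⁱ`, up to sign). -/
noncomputable def kappaDelta (n k : ℕ) : Form n k →ₗ[ℝ] Form n (k+1) where
  toFun ω := fun s => ∑ i ∈ s.1.attach, sgn s.1 i.1 • (X i.1 * ω (eraseIdx s i.2))
  map_add' ω η := by
    funext s
    simp [Finset.sum_add_distrib, mul_add, smul_add]
  map_smul' c ω := by
    funext s
    simp only [Pi.smul_apply, RingHom.id_apply, mul_smul_comm]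
    rw [Finset.smul_sum]
    exact Finset.sum_congr rfl (fun i _ => (smul_comm _ _ _))

/-- Sign of the permutation `(t, tᶜ) ↦ (1,…,n)`, i.e. `⋆ dx^t = starSign t · dx^{tᶜ}`. -/
noncomputable def starSign {n : ℕ} (t : Finset (Fin n)) : ℝ :=
  (-1) ^ (∑ i ∈ t, ((tᶜ).filter (· < i)).card)

/-- The Hodge star operator on `k`-forms on `ℝⁿ`, `k + l = n`. -/
noncomputable def hodge (n k l : ℕ) (h : k + l = n) : Form n k →ₗ[ℝ] Form n l where
  toFun ω := fun s => starSign (s.1ᶜ) •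
    ω ⟨s.1ᶜ, by rw [Finset.card_compl, s.2, Fintype.card_fin]; omega⟩
  map_add' ω η := by funext s; simp [smul_add]
  map_smul' c ω := by funext s; simp only [Pi.smul_apply, RingHom.id_apply]; rw [smul_comm]

/-- The monomial form `x_τ dx^σ`. -/
noncomputable def monForm (n k : ℕ) (τ : Finset (Fin n)) (σ : Idx n k) : Form n k :=
  fun s => if s = σ then ∏ i ∈ τ, X i else 0

/-- `Q_1^-Λ^k = span{ x_τ dx^σ : |σ| = k, 0 ≤ |τ| ≤ n-k, τ ⊆ σᶜ }`. -/
noncomputable def Qm (n k : ℕ) : Submodule ℝ (Form n k) :=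
  Submodule.span ℝ
    {ω | ∃ (τ : Finset (Fin n)) (σ : Idx n k), τ.card ≤ n - k ∧ τ ⊆ (σ.1)ᶜ ∧ ω = monForm n k τ σ}

/-- `Q_1^{*,-}Λ^k = span{ x_τ' dx^σ' : |σ'| = k, 0 ≤ |τ'| ≤ k, τ' ⊆ σ' }`. -/
noncomputable def Qs (n k : ℕ) : Submodule ℝ (Form n k) :=
  Submodule.span ℝ
    {ω | ∃ (τ : Finset (Fin n)) (σ : Idx n k), τ.card ≤ k ∧ τ ⊆ σ.1 ∧ ω = monForm n k τ σ}

/-- `P_0Λ^k`: forms with constant coefficients. -/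
noncomputable def P0 (n k : ℕ) : Submodule ℝ (Form n k) :=
  Submodule.span ℝ {ω | ∃ σ : Idx n k, ω = monForm n k ∅ σ}

/-- The Whitney space `P_1^-Λ^k = P_0Λ^k + κ(P_0Λ^{k+1})`. -/
noncomputable def Pm (n k : ℕ) : Submodule ℝ (Form n k) :=
  P0 n k ⊔ Submodule.map (koszul n k) (P0 n (k+1))

/-- The star Whitney space `P_1^{*,-}Λ^{k+1} = P_0Λ^{k+1} + κ^δ(P_0Λ^k)`. -/
noncomputable def PsS (n k : ℕ) : Submodule ℝ (Form n (k+1)) :=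
  P0 n (k+1) ⊔ Submodule.map (kappaDelta n k) (P0 n k)

/-- `L²` inner product of `k`-forms on the centered box `[-r, r]`. -/
noncomputable def binner (n k : ℕ) (r : Fin n → ℝ) (ω η : Form n k) : ℝ :=
  ∑ s : Idx n k, ∫ x in Set.Icc (fun i => -(r i)) r, eval x (ω s * η s)

/-- `L²` inner product of `k`-forms on the reference cube `T = [-1,1]ⁿ`. -/
noncomputable def finner (n k : ℕ) (ω η : Form n k) : ℝ :=
  binner n k (fun _ => (1 : ℝ)) ω η

/-!
`κ^δ` is exterior multiplication by `∑ xᵢ dxⁱ` (up to sign), so `δ` and `κ^δ` both square to zero,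
and on `(k+1)`-forms they satisfy the homotopy formula `κ^δ δ + δ κ^δ = -(E + n - k - 1)`, where
`E = ∑ xᵢ ∂ᵢ` is the Euler operator acting on coefficients. Both operators preserve
`Q_1^{*,-}`, whose elements are exactly the forms whose coefficient of `dx^σ` is multilinear in
the variables `x_σ`. On a generator `x_τ dx^σ` the homotopy formula is multiplication by
`-(|τ| + n - k - 1)`, which is nonzero when `τ ≠ ∅`; for `τ = ∅` the generator has constant
coefficients and `δ` kills it. This gives the sum. If `δ κ^δ η = 0`, the homotopy formula gives
`(E + n - k - 1) κ^δ η = 0`, which kills every coefficient of positive degree, while `κ^δ η` has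
no constant terms; so the sum is direct.
-/

namespace Finset

lemma sum_sum_erase_eq_zero {ι M : Type*} [DecidableEq ι] [AddCommMonoid M] {t : Finset ι}
    {f : ι → ι → M} (hf : ∀ i ∈ t, ∀ j ∈ t, i ≠ j → f i j + f j i = 0) :
    ∑ i ∈ t, ∑ j ∈ t.erase i, f i j = 0 := by
  rw [← sum_finset_product' t.offDiag t (fun i => t.erase i) (by simp [and_comm, eq_comm])]
  refine sum_involution (fun p _ => p.swap) (fun p hp => ?_) (fun p hp _ h => ?_)
    (fun p hp => ?_) (fun p _ => rfl)
  · obtain ⟨hi, hj, hij⟩ := mem_offDiag.1 hp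
    exact hf _ hi _ hj hij
  · exact (mem_offDiag.1 hp).2.2 (congrArg Prod.fst h).symm
  · obtain ⟨hi, hj, hij⟩ := mem_offDiag.1 hp
    exact mem_offDiag.2 ⟨hj, hi, hij.symm⟩

end Finset

namespace MvPolynomial

open Finset

section Euler

variable {σ R : Type*} [CommSemiring R]

lemma pderiv_comm (i j : σ) (p : MvPolynomial σ R) :
    pderiv i (pderiv j p) = pderiv j (pderiv i p) := by
  rcases eq_or_ne i j with rfl | hij
  · rfl
  ext m
  simp only [coeff_pderiv, Finsupp.add_apply, Finsupp.single_eq_of_ne hij,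
    Finsupp.single_eq_of_ne hij.symm, add_zero, add_right_comm m]
  ring

variable [Fintype σ]

noncomputable def euler (p : MvPolynomial σ R) : MvPolynomial σ R :=
  ∑ i, X i * pderiv i p

lemma euler_monomial (m : σ →₀ ℕ) (a : R) : euler (monomial m a) = m.degree • monomial m a :=
  (isHomogeneous_monomial a rfl).sum_X_mul_pderiv

lemma coeff_euler (p : MvPolynomial σ R) (m : σ →₀ ℕ) :
    coeff m (euler p) = m.degree • coeff m p := by
  classical
  induction p using MvPolynomial.induction_on' with
  | monomial u a =>
    rw [euler_monomial, coeff_smul, coeff_monomial]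
    split_ifs with h
    · rw [h]
    · rw [smul_zero, smul_zero]
  | add p q hp hq =>
    simp only [euler, map_add, mul_add, sum_add_distrib, coeff_add] at *
    rw [hp, hq, smul_add]

lemma euler_prod_X (τ : Finset σ) :
    euler (∏ i ∈ τ, X i : MvPolynomial σ R) = τ.card • ∏ i ∈ τ, X i := by
  have h := (IsHomogeneous.prod τ (fun i => (X i : MvPolynomial σ R)) (fun _ => 1)
    fun i _ => isHomogeneous_X R i).sum_X_mul_pderiv
  rwa [sum_const, smul_eq_mul, mul_one] at h

end Euler

section Multilinear

variable {σ : Type*} (R : Type*) [CommSemiring R] [DecidableEq σ]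

noncomputable def multilinearIn (t : Finset σ) : Submodule R (MvPolynomial σ R) :=
  restrictSupport R {m | ∀ i, m i ≤ if i ∈ t then 1 else 0}

variable {R}

lemma mem_multilinearIn {t : Finset σ} {p : MvPolynomial σ R} :
    p ∈ multilinearIn R t ↔ ∀ m, coeff m p ≠ 0 → ∀ i, m i ≤ if i ∈ t then 1 else 0 := by
  simp only [multilinearIn, mem_restrictSupport_iff, Set.subset_def, Finset.mem_coe,
    mem_support_iff, Set.mem_ofPred_eq]

lemma prod_X_mem_multilinearIn {τ t : Finset σ} (h : τ ⊆ t) :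
    ∏ i ∈ τ, X i ∈ multilinearIn R t := by
  simp_rw [X, ← monomial_sum_one, multilinearIn, monomial_mem_restrictSupport]
  left
  intro l
  simp only [Finsupp.finsetSum_apply, Finsupp.single_apply, sum_ite_eq']
  split_ifs with hl hl' <;> first | omega | exact absurd (h hl) hl'

lemma pderiv_mem_multilinearIn {t : Finset σ} {j : σ} (hj : j ∉ t) {p : MvPolynomial σ R}
    (hp : p ∈ multilinearIn R (insert j t)) : pderiv j p ∈ multilinearIn R t := by
  rw [mem_multilinearIn] at hp ⊢
  intro m hm i
  rw [coeff_pderiv] at hm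
  have hi := hp _ (left_ne_zero_of_mul hm) i
  by_cases hij : i = j
  · subst hij
    simp only [Finsupp.add_apply, Finsupp.single_eq_same, mem_insert_self, if_true] at hi
    simp only [hj, if_false]
    omega
  · simpa [Finsupp.single_eq_of_ne hij, hij] using hi

lemma X_mul_mem_multilinearIn {t : Finset σ} {i : σ} (hi : i ∈ t) {p : MvPolynomial σ R}
    (hp : p ∈ multilinearIn R (t.erase i)) : X i * p ∈ multilinearIn R t := by
  rw [mem_multilinearIn] at hp ⊢
  intro m hm l
  rw [coeff_X_mul'] at hm
  split_ifs at hm with him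
  · have hl := hp _ hm l
    by_cases hli : l = i
    · subst hli
      simp only [Finsupp.tsub_apply, Finsupp.single_eq_same, notMem_erase, if_false] at hl
      simp only [hi, if_true]
      omega
    · simpa [Finsupp.single_eq_of_ne hli, hli] using hl
  · exact absurd rfl hm

end Multilinear

end MvPolynomial

namespace PolyForm

open MvPolynomial Finset

variable {n k : ℕ}

section Signs

variable {t : Finset (Fin n)} {i j : Fin n}

lemma sgn_erase_of_lt (hi : i ∈ t) (hij : i < j) : sgn (t.erase i) j = -sgn t j := by
  have hmem : i ∈ t.filter (· < j) := mem_filter.2 ⟨hi, hij⟩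
  rw [sgn, sgn, filter_erase, ← card_erase_add_one hmem, pow_succ]
  ring

lemma sgn_erase_of_not_lt (h : ¬ i < j) : sgn (t.erase i) j = sgn t j := by
  rw [sgn, sgn, filter_erase,
    erase_eq_of_notMem (fun hc => h (mem_filter.1 hc).2 : i ∉ t.filter (· < j))]

lemma sgn_insert_of_lt (hi : i ∉ t) (hij : i < j) : sgn (insert i t) j = -sgn t j := by
  rw [sgn, sgn, filter_insert, if_pos hij,
    card_insert_of_notMem fun h => hi (mem_filter.1 h).1, pow_succ]
  ring

lemma sgn_insert_of_not_lt (h : ¬ i < j) : sgn (insert i t) j = sgn t j := by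
  rw [sgn, sgn, filter_insert, if_neg h]

lemma sgn_mul_self (t : Finset (Fin n)) (i : Fin n) : sgn t i * sgn t i = 1 := by
  rw [sgn, ← pow_add]
  exact Even.neg_one_pow ⟨_, rfl⟩

lemma sgn_mul_sgn_erase_add_sgn_mul_sgn_insert (hi : i ∈ t) (hj : j ∉ t) :
    sgn t i * sgn (t.erase i) j + sgn t j * sgn (insert j t) i = 0 := by
  rcases (ne_of_mem_of_not_mem hi hj).lt_or_gt with h | h
  · rw [sgn_erase_of_lt hi h, sgn_insert_of_not_lt h.not_gt]
    ring
  · rw [sgn_erase_of_not_lt h.not_gt, sgn_insert_of_lt hj h]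
    ring

lemma sgn_mul_sgn_insert_add_swap (hi : i ∉ t) (hj : j ∉ t) (hij : i ≠ j) :
    sgn t i * sgn (insert i t) j + sgn t j * sgn (insert j t) i = 0 := by
  rcases hij.lt_or_gt with h | h
  · rw [sgn_insert_of_lt hi h, sgn_insert_of_not_lt h.not_gt]
    ring
  · rw [sgn_insert_of_not_lt h.not_gt, sgn_insert_of_lt hj h]
    ring

lemma sgn_mul_sgn_erase_add_swap (hi : i ∈ t) (hj : j ∈ t) (hij : i ≠ j) :
    sgn t i * sgn (t.erase i) j + sgn t j * sgn (t.erase j) i = 0 := by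
  rcases hij.lt_or_gt with h | h
  · rw [sgn_erase_of_lt hi h, sgn_erase_of_not_lt h.not_gt]
    ring
  · rw [sgn_erase_of_not_lt h.not_gt, sgn_erase_of_lt hj h]
    ring

end Signs

/-- The coefficient of `ω` at an arbitrary finset (zero off cardinality `k`); it lets the
operators be written as sums over plain finsets instead of `insertIdx`/`eraseIdx`. -/
noncomputable def coeffAt (ω : Form n k) (t : Finset (Fin n)) : MvPolynomial (Fin n) ℝ :=
  if h : t.card = k then ω ⟨t, h⟩ else 0

lemma coeffAt_val (ω : Form n k) (s : Idx n k) : coeffAt ω s.1 = ω s := by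
  rw [coeffAt, dif_pos s.2]

lemma codiff_apply (ω : Form n (k+1)) (s : Idx n k) :
    codiff n k ω s = -∑ j ∈ s.1ᶜ, sgn s.1 j • pderiv j (coeffAt ω (insert j s.1)) := by
  rw [← sum_attach]
  exact congrArg Neg.neg <| sum_congr rfl fun j _ => by
    rw [← coeffAt_val ω (insertIdx s (mem_compl.mp j.2))]
    rfl

lemma kappaDelta_apply (ω : Form n k) (s : Idx n (k+1)) :
    kappaDelta n k ω s = ∑ i ∈ s.1, sgn s.1 i • (X i * coeffAt ω (s.1.erase i)) := by
  rw [← sum_attach]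
  exact sum_congr rfl fun i _ => by
    rw [← coeffAt_val ω (eraseIdx s i.2)]
    rfl

lemma codiff_comp_codiff (ω : Form n (k+2)) : codiff n k (codiff n (k+1) ω) = 0 := by
  funext s
  have hδ : ∀ j ∈ s.1ᶜ, coeffAt (codiff n (k+1) ω) (insert j s.1) = -∑ l ∈ s.1ᶜ.erase j,
      sgn (insert j s.1) l • pderiv l (coeffAt ω (insert l (insert j s.1))) := by
    intro j hj
    rw [show insert j s.1 = (insertIdx s (mem_compl.1 hj)).1 from rfl, coeffAt_val,
      codiff_apply, ← compl_insert]
    rfl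
  rw [codiff_apply, Pi.zero_apply, neg_eq_zero,
    sum_congr rfl fun j hj => congrArg (fun p => sgn s.1 j • pderiv j p) (hδ j hj)]
  simp only [map_neg, map_sum, Derivation.map_smul, smul_neg, smul_sum, smul_smul,
    sum_neg_distrib, neg_eq_zero]
  refine sum_sum_erase_eq_zero fun j hj l hl hjl => ?_
  rw [insert_comm, pderiv_comm, ← add_smul,
    sgn_mul_sgn_insert_add_swap (mem_compl.1 hj) (mem_compl.1 hl) hjl, zero_smul]

lemma kappaDelta_comp_kappaDelta (η : Form n k) :
    kappaDelta n (k+1) (kappaDelta n k η) = 0 := by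
  funext s
  have hκ : ∀ i ∈ s.1, coeffAt (kappaDelta n k η) (s.1.erase i) = ∑ l ∈ s.1.erase i,
      sgn (s.1.erase i) l • (X l * coeffAt η ((s.1.erase i).erase l)) := by
    intro i hi
    rw [show s.1.erase i = (eraseIdx s hi).1 from rfl, coeffAt_val, kappaDelta_apply]
  rw [kappaDelta_apply, Pi.zero_apply,
    sum_congr rfl fun i hi => congrArg (fun p => sgn s.1 i • (X i * p)) (hκ i hi)]
  simp only [mul_sum, mul_smul_comm, smul_sum, smul_smul]
  refine sum_sum_erase_eq_zero fun i hi l hl hil => ?_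
  rw [erase_right_comm, mul_left_comm, ← add_smul, sgn_mul_sgn_erase_add_swap hi hl hil,
    zero_smul]

lemma kappaDelta_codiff_apply (ω : Form n (k+1)) (s : Idx n (k+1)) :
    kappaDelta n k (codiff n k ω) s = -∑ i ∈ s.1, X i * pderiv i (ω s) -
      ∑ i ∈ s.1, ∑ j ∈ s.1ᶜ, (sgn s.1 i * sgn (s.1.erase i) j) •
        (X i * pderiv j (coeffAt ω (insert j (s.1.erase i)))) := by
  have hδ : ∀ i ∈ s.1, coeffAt (codiff n k ω) (s.1.erase i) = -(sgn s.1 i • pderiv i (ω s)) -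
      ∑ j ∈ s.1ᶜ, sgn (s.1.erase i) j • pderiv j (coeffAt ω (insert j (s.1.erase i))) := by
    intro i hi
    rw [show s.1.erase i = (eraseIdx s hi).1 from rfl, coeffAt_val, codiff_apply]
    change -∑ j ∈ (s.1.erase i)ᶜ,
      sgn (s.1.erase i) j • pderiv j (coeffAt ω (insert j (s.1.erase i))) = _
    rw [compl_erase, sum_insert (notMem_compl.2 hi), insert_erase hi, coeffAt_val,
      sgn_erase_of_not_lt (lt_irrefl i), neg_add, sub_eq_add_neg]
    rfl
  rw [kappaDelta_apply, ← sum_neg_distrib, ← sum_sub_distrib]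
  refine sum_congr rfl fun i hi => ?_
  rw [hδ i hi]
  simp only [mul_sub, mul_neg, smul_sub, smul_neg, mul_smul_comm, smul_smul, sgn_mul_self,
    one_smul, mul_sum, smul_sum]

lemma codiff_kappaDelta_apply (ω : Form n (k+1)) (s : Idx n (k+1)) :
    codiff n (k+1) (kappaDelta n (k+1) ω) s = -∑ j ∈ s.1ᶜ, (ω s + X j * pderiv j (ω s)) -
      ∑ j ∈ s.1ᶜ, ∑ i ∈ s.1, (sgn s.1 j * sgn (insert j s.1) i) •
        (X i * pderiv j (coeffAt ω (insert j (s.1.erase i)))) := by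
  have hκ : ∀ j ∈ s.1ᶜ, coeffAt (kappaDelta n (k+1) ω) (insert j s.1) =
      sgn s.1 j • (X j * ω s) +
        ∑ i ∈ s.1, sgn (insert j s.1) i • (X i * coeffAt ω (insert j (s.1.erase i))) := by
    intro j hj
    have hj' : j ∉ s.1 := mem_compl.1 hj
    rw [show insert j s.1 = (insertIdx s hj').1 from rfl, coeffAt_val, kappaDelta_apply]
    change ∑ i ∈ insert j s.1, sgn (insert j s.1) i • (X i * coeffAt ω ((insert j s.1).erase i))
      = _
    rw [sum_insert hj', erase_insert hj', coeffAt_val, sgn_insert_of_not_lt (lt_irrefl j)]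
    congr 1
    refine sum_congr rfl fun i hi => ?_
    rw [erase_insert_of_ne (ne_of_mem_of_not_mem hi hj').symm]
    rfl
  rw [codiff_apply, ← neg_add', ← sum_add_distrib]
  refine congrArg Neg.neg (sum_congr rfl fun j hj => ?_)
  rw [hκ j hj, map_add, Derivation.map_smul, pderiv_mul, pderiv_X_self, one_mul, smul_add,
    smul_smul, sgn_mul_self, one_smul, map_sum, smul_sum]
  refine congrArg _ (sum_congr rfl fun i hi => ?_)
  rw [Derivation.map_smul, pderiv_mul, pderiv_X_of_ne (ne_of_mem_of_not_mem hi (mem_compl.1 hj)),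
    zero_mul, zero_add, smul_smul]

theorem kappaDelta_codiff_add_codiff_kappaDelta (ω : Form n (k+1)) (s : Idx n (k+1)) :
    kappaDelta n k (codiff n k ω) s + codiff n (k+1) (kappaDelta n (k+1) ω) s =
      -(euler (ω s) + ((n - (k+1) : ℕ) : ℝ) • ω s) := by
  have hcross : ∑ i ∈ s.1, ∑ j ∈ s.1ᶜ, (sgn s.1 i * sgn (s.1.erase i) j) •
        (X i * pderiv j (coeffAt ω (insert j (s.1.erase i)))) =
      -∑ i ∈ s.1, ∑ j ∈ s.1ᶜ, (sgn s.1 j * sgn (insert j s.1) i) •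
        (X i * pderiv j (coeffAt ω (insert j (s.1.erase i)))) := by
    rw [← sum_neg_distrib]
    refine sum_congr rfl fun i hi => ?_
    rw [← sum_neg_distrib]
    refine sum_congr rfl fun j hj => ?_
    rw [← neg_smul, ← neg_eq_of_add_eq_zero_right
      (sgn_mul_sgn_erase_add_sgn_mul_sgn_insert hi (mem_compl.1 hj)), neg_neg]
  have hcount : ∑ _j ∈ s.1ᶜ, ω s = ((n - (k+1) : ℕ) : ℝ) • ω s := by
    rw [sum_const, card_compl, Fintype.card_fin, s.2, Nat.cast_smul_eq_nsmul]
  rw [kappaDelta_codiff_apply, codiff_kappaDelta_apply, sum_comm (s := s.1ᶜ), hcross,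
    sum_add_distrib, hcount, euler, ← sum_add_sum_compl s.1]
  abel

lemma single_mem_Qs {s : Idx n k} {p : MvPolynomial (Fin n) ℝ} (hp : p ∈ multilinearIn ℝ s.1) :
    Pi.single s p ∈ Qs n k := by
  suffices multilinearIn ℝ s.1 ≤ (Qs n k).comap (LinearMap.single ℝ (fun _ => _) s) from this hp
  rw [multilinearIn, restrictSupport_eq_span, Submodule.span_le]
  rintro _ ⟨m, hm, rfl⟩
  have hm1 : ∀ i ∈ m.support, m i = 1 := fun i hi => by
    have h1 := hm i
    have h2 := Finsupp.mem_support_iff.1 hi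
    split_ifs at h1 <;> omega
  have hsub : m.support ⊆ s.1 := fun i hi => by
    by_contra h
    have h1 := hm i
    rw [if_neg h] at h1
    exact Finsupp.mem_support_iff.1 hi (by omega)
  refine Submodule.subset_span ⟨m.support, s, (card_le_card hsub).trans s.2.le, hsub, ?_⟩
  funext s'
  rw [LinearMap.single_apply, Pi.single_apply, monForm]
  beta_reduce
  rw [← prod_X_pow_eq_monomial, prod_congr rfl fun i hi => by rw [hm1 i hi, pow_one]]

lemma Qs_eq_pi_multilinearIn :
    Qs n k = Submodule.pi Set.univ fun s : Idx n k => multilinearIn ℝ s.1 := by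
  apply le_antisymm
  · rw [Qs, Submodule.span_le]
    rintro _ ⟨τ, σ, -, hτσ, rfl⟩ s -
    simp only [monForm]
    split_ifs with h
    · exact h ▸ prod_X_mem_multilinearIn hτσ
    · exact zero_mem _
  · intro ω hω
    rw [← univ_sum_single ω]
    exact sum_mem fun s _ => single_mem_Qs (hω s trivial)

lemma map_codiff_Qs_le : (Qs n (k+1)).map (codiff n k) ≤ Qs n k := by
  rintro _ ⟨ω, hω, rfl⟩
  rw [SetLike.mem_coe, Qs_eq_pi_multilinearIn] at hω
  rw [Qs_eq_pi_multilinearIn]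
  intro s _
  rw [codiff_apply]
  refine neg_mem (sum_mem fun j hj => Submodule.smul_mem _ _ ?_)
  refine pderiv_mem_multilinearIn (mem_compl.1 hj) ?_
  rw [show insert j s.1 = (insertIdx s (mem_compl.1 hj)).1 from rfl, coeffAt_val]
  exact hω _ trivial

lemma map_kappaDelta_Qs_le : (Qs n k).map (kappaDelta n k) ≤ Qs n (k+1) := by
  rintro _ ⟨ω, hω, rfl⟩
  rw [SetLike.mem_coe, Qs_eq_pi_multilinearIn] at hω
  rw [Qs_eq_pi_multilinearIn]
  intro s _
  rw [kappaDelta_apply]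
  refine sum_mem fun i hi => Submodule.smul_mem _ _ (X_mul_mem_multilinearIn hi ?_)
  rw [show s.1.erase i = (eraseIdx s hi).1 from rfl, coeffAt_val]
  exact hω _ trivial

lemma kappaDelta_codiff_add_codiff_kappaDelta_monForm (τ : Finset (Fin n)) (σ : Idx n (k+1)) :
    kappaDelta n k (codiff n k (monForm n (k+1) τ σ)) +
        codiff n (k+1) (kappaDelta n (k+1) (monForm n (k+1) τ σ)) =
      -((τ.card + (n - (k+1)) : ℕ) : ℝ) • monForm n (k+1) τ σ := by
  funext s
  rw [Pi.add_apply, kappaDelta_codiff_add_codiff_kappaDelta, Pi.smul_apply, monForm]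
  split_ifs
  · rw [euler_prod_X, Nat.cast_add, neg_smul, add_smul]
    simp only [Nat.cast_smul_eq_nsmul]
  · simp [euler]

lemma codiff_monForm_empty (σ : Idx n (k+1)) : codiff n k (monForm n (k+1) ∅ σ) = 0 := by
  funext s
  simp [codiff_apply, coeffAt, monForm, apply_dite (pderiv _), apply_ite (pderiv _)]

lemma kappaDelta_eq_zero_of_codiff_kappaDelta_eq_zero {η : Form n k}
    (h : codiff n k (kappaDelta n k η) = 0) : kappaDelta n k η = 0 := by
  funext s
  have hE : euler (kappaDelta n k η s) + ((n - (k+1) : ℕ) : ℝ) • kappaDelta n k η s = 0 := by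
    have := kappaDelta_codiff_add_codiff_kappaDelta (kappaDelta n k η) s
    simp only [h, kappaDelta_comp_kappaDelta, map_zero, Pi.zero_apply, add_zero] at this
    exact neg_eq_zero.1 this.symm
  ext m
  have hm := congrArg (coeff m) hE
  rw [coeff_add, coeff_euler, coeff_smul, coeff_zero, smul_eq_mul, nsmul_eq_mul, ← add_mul,
    ← Nat.cast_add] at hm
  rcases mul_eq_zero.1 hm with hc | hc
  · obtain rfl : m = 0 := (Finsupp.degree_eq_zero_iff m).1 (Nat.add_eq_zero_iff.1
      (Nat.cast_eq_zero.1 hc)).1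
    simp [kappaDelta_apply, coeff_sum, coeff_X_mul']
  · exact hc

lemma map_kappaDelta_map_codiff_Qs_le :
    ((Qs n (k+1)).map (codiff n k)).map (kappaDelta n k) ≤ Qs n (k+1) :=
  (Submodule.map_mono map_codiff_Qs_le).trans map_kappaDelta_Qs_le

lemma monForm_mem_ker_sup_map {τ : Finset (Fin n)} {σ : Idx n (k+1)}
    (hm : monForm n (k+1) τ σ ∈ Qs n (k+1)) :
    monForm n (k+1) τ σ ∈ (LinearMap.ker (codiff n k) ⊓ Qs n (k+1)) ⊔
      ((Qs n (k+1)).map (codiff n k)).map (kappaDelta n k) := by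
  obtain rfl | hτ := τ.eq_empty_or_nonempty
  · exact Submodule.mem_sup_left ⟨codiff_monForm_empty σ, hm⟩
  set m := monForm n (k+1) τ σ
  set c : ℝ := ((τ.card + (n - (k+1)) : ℕ) : ℝ)
  have hc : c ≠ 0 := Nat.cast_ne_zero.2 (by have := hτ.card_pos; omega)
  have hδκ : codiff n (k+1) (kappaDelta n (k+1) m) ∈ Qs n (k+1) :=
    map_codiff_Qs_le ⟨_, map_kappaDelta_Qs_le ⟨m, hm, rfl⟩, rfl⟩
  have hdecomp : m = (-c⁻¹) • codiff n (k+1) (kappaDelta n (k+1) m) +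
      kappaDelta n k (codiff n k ((-c⁻¹) • m)) := by
    rw [map_smul, map_smul, ← smul_add, add_comm (codiff n (k+1) _),
      kappaDelta_codiff_add_codiff_kappaDelta_monForm, smul_smul, neg_mul_neg,
      inv_mul_cancel₀ hc, one_smul]
  rw [hdecomp]
  refine Submodule.add_mem_sup ⟨?_, Submodule.smul_mem _ _ hδκ⟩
    ⟨_, ⟨_, Submodule.smul_mem _ _ hm, rfl⟩, rfl⟩
  rw [SetLike.mem_coe, LinearMap.mem_ker, map_smul, codiff_comp_codiff, smul_zero]

lemma Qs_le_ker_sup_map :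
    Qs n (k+1) ≤ (LinearMap.ker (codiff n k) ⊓ Qs n (k+1)) ⊔
      ((Qs n (k+1)).map (codiff n k)).map (kappaDelta n k) := by
  refine Submodule.span_le.2 ?_
  rintro _ ⟨τ, σ, hcard, hτσ, rfl⟩
  exact monForm_mem_ker_sup_map (Submodule.subset_span ⟨τ, σ, hcard, hτσ, rfl⟩)

end PolyForm

open PolyForm

theorem stmt14_general (n k : ℕ) :
    Disjoint (LinearMap.ker (codiff n k) ⊓ Qs n (k+1))
        (Submodule.map (kappaDelta n k) (Submodule.map (codiff n k) (Qs n (k+1)))) ∧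
      Qs n (k+1) =
        (LinearMap.ker (codiff n k) ⊓ Qs n (k+1)) ⊔
          Submodule.map (kappaDelta n k) (Submodule.map (codiff n k) (Qs n (k+1))) := by
  refine ⟨Submodule.disjoint_def.2 ?_,
    le_antisymm Qs_le_ker_sup_map (sup_le inf_le_right map_kappaDelta_map_codiff_Qs_le)⟩
  rintro _ hker ⟨η, -, rfl⟩
  exact kappaDelta_eq_zero_of_codiff_kappaDelta_eq_zero (Submodule.mem_inf.1 hker).1

/-- The homotopy decomposition of the star space:
`Q_1^{*,-}Λ^{k+1} = N(δ_{k+1}, Q_1^{*,-}Λ^{k+1}) ⊕ κ^δ(R(δ_{k+1}, Q_1^{*,-}Λ^{k+1}))`,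
where `κ^δ = ⋆ ∘ κ ∘ ⋆`. -/
theorem stmt14 (n k : ℕ) (hk : k + 1 ≤ n) :
    Disjoint (LinearMap.ker (codiff n k) ⊓ Qs n (k+1))
        (Submodule.map (kappaDelta n k) (Submodule.map (codiff n k) (Qs n (k+1)))) ∧
      Qs n (k+1) =
        (LinearMap.ker (codiff n k) ⊓ Qs n (k+1)) ⊔
          Submodule.map (kappaDelta n k) (Submodule.map (codiff n k) (Qs n (k+1))) :=
  stmt14_general n k
end

section
/- Discrete complex property: if ω_h is piecewise in P_1^-Λ^k on a cubical mesh G_h and satisfies Σ_K [⟨d^k ω_h, μ_h⟩_{L^2Λ^{k+1}(K)} − ⟨ω_h, δ_{k+1} μ_h⟩_{L^2Λ^k(K)}] = 0 for all μ_h in the conforming Q_1^{*,-}Λ^{k+1} finite element space V_{h0}^{Q,*}Λ^{k+1}, then the piecewise exterior derivative d_h^k ω_h (which is piecewise constant, hence in P_1^-Λ^{k+1} on each cell) satisfies the analogous condition at level k+1: Σ_K [⟨d^{k+1}_h(d_h^k ω_h), η_h⟩ − ⟨d_h^k ω_h, δ_{k+2} η_h⟩] = 0 for all η_h ∈ V_{h0}^{Q,*}Λ^{k+2}.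 In particular d_h^k maps W_h^{def}Λ^k into the null space of d_h^{k+1} in W_h^{def}Λ^{k+1}. -/
/-!
On each cell, `d` maps the Whitney space `P_1^-Λ^k = P_0Λ^k + κ(P_0Λ^{k+1})` into the constant
forms `P_0Λ^{k+1}`, because `d` kills constants and `d κ = (k+1)·id` on constant `(k+1)`-forms;
hence `d_h^{k+1} d_h^k ω_h = 0`. Since also `δ δ = 0` and `δ η ∈ V` for `η ∈ V'`, the
level-`(k+1)` condition tested with `η` is the negative of the level-`k` condition tested with
`μ = δ η`.
-/

open MvPolynomial Finset MeasureTheory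

namespace MvPolynomial

theorem pderiv_pderiv_comm {R σ : Type*} [CommSemiring R] [DecidableEq σ] (i j : σ)
    (p : MvPolynomial σ R) : pderiv i (pderiv j p) = pderiv j (pderiv i p) := by
  induction p using MvPolynomial.induction_on' with
  | monomial s a =>
    by_cases h : i = j
    · subst h; rfl
    simp only [pderiv_monomial]
    congr 1
    · rw [tsub_tsub, tsub_tsub, add_comm]
    · have hi : (s - Finsupp.single j 1 : σ →₀ ℕ) i = s i := by
        simp [Finsupp.single_eq_of_ne' (Ne.symm h)]
      have hj : (s - Finsupp.single i 1 : σ →₀ ℕ) j = s j := by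
        simp [Finsupp.single_eq_of_ne' h]
      rw [hi, hj]
      ring
  | add p q hp hq => simp only [map_add, hp, hq]

end MvPolynomial

theorem Finset.sum_sum_erase_eq_zero_of_antisymm {α M : Type*} [DecidableEq α]
    [AddCommMonoid M] (t : Finset α) (f : α → α → M)
    (hf : ∀ i ∈ t, ∀ j ∈ t, i ≠ j → f i j + f j i = 0) :
    ∑ i ∈ t, ∑ j ∈ t.erase i, f i j = 0 := by
  have hoff : ∑ i ∈ t, ∑ j ∈ t.erase i, f i j = ∑ p ∈ t.offDiag, f p.1 p.2 := by
    have hdiag : t.offDiag = (t ×ˢ t).filter fun p => p.1 ≠ p.2 := by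
      ext p
      simp only [Finset.mem_offDiag, Finset.mem_filter, Finset.mem_product, and_assoc]
    rw [hdiag, Finset.sum_filter, Finset.sum_product]
    refine Finset.sum_congr rfl fun i _ => ?_
    rw [← Finset.filter_ne t i, Finset.sum_filter]
  rw [hoff]
  refine Finset.sum_involution (fun p _ => p.swap) (fun p hp => ?_) (fun p hp _ => ?_)
    (fun p hp => ?_) (fun p _ => rfl)
  · obtain ⟨hp₁, hp₂, hne⟩ := Finset.mem_offDiag.mp hp
    exact hf _ hp₁ _ hp₂ hne
  · exact fun h => (Finset.mem_offDiag.mp hp).2.2 (congrArg Prod.fst h).symm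
  · obtain ⟨hp₁, hp₂, hne⟩ := Finset.mem_offDiag.mp hp
    exact Finset.mem_offDiag.mpr ⟨hp₂, hp₁, hne.symm⟩

section Forms

variable {n k : ℕ}

lemma sgn_mul_self (s : Finset (Fin n)) (i : Fin n) : sgn s i * sgn s i = 1 := by
  rw [sgn, ← pow_add]
  exact Even.neg_one_pow ⟨_, rfl⟩

lemma sgn_erase_self (s : Finset (Fin n)) (i : Fin n) : sgn (s.erase i) i = sgn s i := by
  unfold sgn
  congr 2
  ext a
  simp only [Finset.mem_filter, Finset.mem_erase, and_congr_left_iff]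
  exact fun h => ⟨And.right, fun ha => ⟨h.ne, ha⟩⟩

lemma sgn_insert_of_lt {s : Finset (Fin n)} {i j : Fin n} (hi : i ∉ s) (h : i < j) :
    sgn (insert i s) j = -sgn s j := by
  unfold sgn
  rw [Finset.filter_insert, if_pos h,
    Finset.card_insert_of_notMem (fun hm => hi (Finset.mem_filter.mp hm).1), pow_succ]
  ring

lemma sgn_insert_of_not_lt {s : Finset (Fin n)} {i j : Fin n} (h : ¬ i < j) :
    sgn (insert i s) j = sgn s j := by
  unfold sgn
  rw [Finset.filter_insert, if_neg h]

lemma sgn_mul_sgn_insert_add_swap {s : Finset (Fin n)} {i j : Fin n} (hi : i ∉ s) (hj : j ∉ s)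
    (hij : i ≠ j) : sgn s i * sgn (insert i s) j + sgn s j * sgn (insert j s) i = 0 := by
  rcases lt_or_gt_of_ne hij with h | h
  · rw [sgn_insert_of_lt hi h, sgn_insert_of_not_lt (asymm h)]
    ring
  · rw [sgn_insert_of_not_lt (asymm h), sgn_insert_of_lt hj h]
    ring

/-- Coefficient of `ω` at an arbitrary finset (`0` unless it has `k` elements), so that `extd`,
`koszul` and `codiff` become sums over plain finsets instead of `attach`ed ones. -/
noncomputable def coeffAt (ω : Form n k) (t : Finset (Fin n)) : MvPolynomial (Fin n) ℝ :=
  if h : t.card = k then ω ⟨t, h⟩ else 0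

lemma coeffAt_of_card_eq (ω : Form n k) {t : Finset (Fin n)} (h : t.card = k) :
    coeffAt ω t = ω ⟨t, h⟩ :=
  dif_pos h

lemma coeffAt_val (ω : Form n k) (s : Idx n k) : coeffAt ω s.1 = ω s :=
  dif_pos s.2

lemma apply_eraseIdx (ω : Form n k) (t : Idx n (k+1)) {i : Fin n} (hi : i ∈ t.1) :
    ω (eraseIdx t hi) = coeffAt ω (t.1.erase i) :=
  (coeffAt_val ω _).symm

lemma apply_insertIdx (ω : Form n (k+1)) (s : Idx n k) {i : Fin n} (hi : i ∉ s.1) :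
    ω (insertIdx s hi) = coeffAt ω (insert i s.1) :=
  (coeffAt_val ω _).symm

lemma extd_apply (ω : Form n k) (t : Idx n (k+1)) :
    extd n k ω t = ∑ j ∈ t.1, sgn t.1 j • pderiv j (coeffAt ω (t.1.erase j)) := by
  simp only [extd, LinearMap.coe_mk, AddHom.coe_mk, apply_eraseIdx]
  exact Finset.sum_attach t.1 fun j => sgn t.1 j • pderiv j (coeffAt ω (t.1.erase j))

lemma koszul_apply (ω : Form n (k+1)) (s : Idx n k) :
    koszul n k ω s = ∑ i ∈ s.1ᶜ, sgn s.1 i • (X i * coeffAt ω (insert i s.1)) := by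
  simp only [koszul, LinearMap.coe_mk, AddHom.coe_mk, apply_insertIdx]
  exact Finset.sum_attach s.1ᶜ fun i => sgn s.1 i • (X i * coeffAt ω (insert i s.1))

lemma codiff_apply (ξ : Form n (k+1)) (s : Idx n k) :
    codiff n k ξ s = -∑ i ∈ s.1ᶜ, sgn s.1 i • pderiv i (coeffAt ξ (insert i s.1)) := by
  show -_ = -_
  simp only [apply_insertIdx]
  exact congrArg Neg.neg
    (Finset.sum_attach s.1ᶜ fun i => sgn s.1 i • pderiv i (coeffAt ξ (insert i s.1)))

lemma coeffAt_codiff_insert (η : Form n (k+2)) (s : Idx n k) {i : Fin n} (hi : i ∉ s.1) :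
    coeffAt (codiff n (k+1) η) (insert i s.1) = -∑ j ∈ (insert i s.1)ᶜ,
      sgn (insert i s.1) j • pderiv j (coeffAt η (insert j (insert i s.1))) := by
  have hc : (insert i s.1).card = k + 1 := by rw [Finset.card_insert_of_notMem hi, s.2]
  rw [coeffAt_of_card_eq _ hc, codiff_apply]

/-- `δ δ = 0`: the double sum is antisymmetric in the two inserted indices because partial
derivatives commute while the two insertion signs differ. -/
theorem codiff_codiff (η : Form n (k+2)) : codiff n k (codiff n (k+1) η) = 0 := by
  funext s
  have hexpand : ∀ i ∈ s.1ᶜ,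
      sgn s.1 i • pderiv i (coeffAt (codiff n (k+1) η) (insert i s.1))
        = -∑ j ∈ s.1ᶜ.erase i, sgn s.1 i • sgn (insert i s.1) j •
            pderiv i (pderiv j (coeffAt η (insert j (insert i s.1)))) := by
    intro i hi
    rw [coeffAt_codiff_insert η s (Finset.mem_compl.mp hi), map_neg, map_sum, smul_neg,
      Finset.smul_sum, Finset.compl_insert]
    simp only [(pderiv i).map_smul]
  rw [codiff_apply, Finset.sum_congr rfl hexpand, Finset.sum_neg_distrib, neg_neg,
    Pi.zero_apply]
  refine Finset.sum_sum_erase_eq_zero_of_antisymm s.1ᶜ _ fun i hi j hj hij => ?_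
  rw [smul_smul, smul_smul, Finset.insert_comm, pderiv_pderiv_comm j i, ← add_smul,
    sgn_mul_sgn_insert_add_swap (Finset.mem_compl.mp hi) (Finset.mem_compl.mp hj) hij,
    zero_smul]

lemma pderiv_coeffAt_monForm_empty {l : ℕ} (σ : Idx n l) (j : Fin n) (u : Finset (Fin n)) :
    pderiv j (coeffAt (monForm n l ∅ σ) u) = 0 := by
  unfold coeffAt monForm
  split_ifs <;> simp

lemma extd_eq_zero_of_mem_P0 {ω : Form n k} (h : ω ∈ P0 n k) : extd n k ω = 0 := by
  induction h using Submodule.span_induction with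
  | mem x hx =>
    obtain ⟨σ, rfl⟩ := hx
    funext t
    simp [extd_apply, pderiv_coeffAt_monForm_empty]
  | zero => exact map_zero _
  | add x y _ _ hx hy => rw [map_add, hx, hy, add_zero]
  | smul c x _ hx => rw [map_smul, hx, smul_zero]

/-- Only the `i = j` term of `κ` survives `∂_j`, and it returns the coefficient with sign
`sgn² = 1`; summing over the `k + 1` indices `j ∈ t` gives the factor. -/
lemma extd_koszul_monForm_empty (σ : Idx n (k+1)) :
    extd n k (koszul n k (monForm n (k+1) ∅ σ))
      = ((k : ℝ) + 1) • monForm n (k+1) ∅ σ := by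
  set m := monForm n (k+1) ∅ σ
  funext t
  have hterm : ∀ j ∈ t.1,
      sgn t.1 j • pderiv j (coeffAt (koszul n k m) (t.1.erase j)) = m t := by
    intro j hj
    have hcard : (t.1.erase j).card = k := by
      rw [Finset.card_erase_of_mem hj, t.2, Nat.add_sub_cancel]
    have hsummand : ∀ i,
        pderiv j (sgn (t.1.erase j) i • (X i * coeffAt m (insert i (t.1.erase j))))
          = sgn (t.1.erase j) i • (pderiv j (X i) * coeffAt m (insert i (t.1.erase j))) := by
      intro i
      rw [(pderiv j).map_smul, pderiv_mul, pderiv_coeffAt_monForm_empty, mul_zero, add_zero]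
    rw [coeffAt_of_card_eq _ hcard, koszul_apply, map_sum,
      Finset.sum_congr rfl fun i _ => hsummand i,
      Finset.sum_eq_single_of_mem j (by simp) fun i _ hij => by
        rw [pderiv_X_of_ne hij, zero_mul, smul_zero]]
    rw [pderiv_X_self, one_mul, Finset.insert_erase hj, sgn_erase_self, smul_smul, sgn_mul_self,
      one_smul]
    exact coeffAt_val m t
  rw [extd_apply, Finset.sum_congr rfl hterm, Finset.sum_const, t.2, ← Nat.cast_smul_eq_nsmul ℝ]
  push_cast
  rfl

lemma extd_koszul_mem_P0 {ω : Form n (k+1)} (h : ω ∈ P0 n (k+1)) :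
    extd n k (koszul n k ω) ∈ P0 n (k+1) := by
  induction h using Submodule.span_induction with
  | mem x hx =>
    obtain ⟨σ, rfl⟩ := hx
    rw [extd_koszul_monForm_empty]
    exact Submodule.smul_mem _ _ (Submodule.subset_span ⟨σ, rfl⟩)
  | zero => rw [map_zero, map_zero]; exact Submodule.zero_mem _
  | add x y _ _ hx hy => rw [map_add, map_add]; exact Submodule.add_mem _ hx hy
  | smul c x _ hx => rw [map_smul, map_smul]; exact Submodule.smul_mem _ _ hx

lemma extd_mem_P0_of_mem_Pm {ω : Form n k} (h : ω ∈ Pm n k) : extd n k ω ∈ P0 n (k+1) := by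
  obtain ⟨a, ha, b, hb, rfl⟩ := Submodule.mem_sup.mp h
  obtain ⟨c, hc, rfl⟩ := Submodule.mem_map.mp hb
  rw [map_add, extd_eq_zero_of_mem_P0 ha, zero_add]
  exact extd_koszul_mem_P0 hc

lemma extd_extd_of_mem_Pm {ω : Form n k} (h : ω ∈ Pm n k) : extd n (k+1) (extd n k ω) = 0 :=
  extd_eq_zero_of_mem_P0 (extd_mem_P0_of_mem_Pm h)

lemma binner_zero_left (r : Fin n → ℝ) (η : Form n k) : binner n k r 0 η = 0 := by
  simp [binner]

lemma binner_zero_right (r : Fin n → ℝ) (ω : Form n k) : binner n k r ω 0 = 0 := by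
  simp [binner]

lemma binner_extd_sub_binner_codiff_of_mem_Pm (r : Fin n → ℝ) {ω : Form n k}
    (hω : ω ∈ Pm n k) (η : Form n (k+2)) :
    binner n (k+2) r (extd n (k+1) (extd n k ω)) η
        - binner n (k+1) r (extd n k ω) (codiff n (k+1) η)
      = -(binner n (k+1) r (extd n k ω) (codiff n (k+1) η)
          - binner n k r ω (codiff n k (codiff n (k+1) η))) := by
  rw [extd_extd_of_mem_Pm hω, binner_zero_left, codiff_codiff, binner_zero_right]
  ring

end Forms

theorem stmt17_general (n k : ℕ)
    (ι : Type) [Fintype ι] (r : ι → Fin n → ℝ)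
    (V : Submodule ℝ (ι → Form n (k+1))) (V' : Submodule ℝ (ι → Form n (k+2)))
    (hδ : ∀ η ∈ V', (fun K => codiff n (k+1) (η K)) ∈ V)
    (ωh : ι → Form n k) (hshape : ∀ K, ωh K ∈ Pm n k)
    (hω : ∀ μ ∈ V, ∑ K : ι,
      (binner n (k+1) (r K) (extd n k (ωh K)) (μ K)
        - binner n k (r K) (ωh K) (codiff n k (μ K))) = 0) :
    (∀ K, extd n k (ωh K) ∈ Pm n (k+1)) ∧
      (∀ η ∈ V', ∑ K : ι,
        (binner n (k+2) (r K) (extd n (k+1) (extd n k (ωh K))) (η K)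
          - binner n (k+1) (r K) (extd n k (ωh K)) (codiff n (k+1) (η K))) = 0) ∧
      (∀ K, extd n (k+1) (extd n k (ωh K)) = 0) := by
  refine ⟨fun K => Submodule.mem_sup_left (extd_mem_P0_of_mem_Pm (hshape K)), fun η hη => ?_,
    fun K => extd_extd_of_mem_Pm (hshape K)⟩
  rw [Finset.sum_congr rfl fun K _ =>
      binner_extd_sub_binner_codiff_of_mem_Pm (r K) (hshape K) (η K),
    Finset.sum_neg_distrib, hω _ (hδ η hη), neg_zero]

/-- Lemma 4.3, discrete complex property. On a cubical mesh (cells indexed by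
`ι`, each cell an axis-parallel box of half-widths `r K`, forms written in cell-centered local
coordinates), let `V ⊆ Π_K Q_1^{*,-}Λ^{k+1}` and `V' ⊆ Π_K Q_1^{*,-}Λ^{k+2}` be the conforming
`Q_1^{*,-}` finite element spaces (abstracted by their shape-function property and the conformity
property `R(δ_{k+2}, V') ⊆ V`, i.e. cellwise `δ` maps `V'` into `V`).
If `ω_h` is piecewise in `P_1^-Λ^k` and satisfies the defining adjoint condition of
`W_h^{def}Λ^k` against `V`, then `d_h^k ω_h` is piecewise in `P_1^-Λ^{k+1}` and satisfies the
analogous condition at level `k+1` against `V'`; in particular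
`d_h^k ω_h ∈ N(d_h^{k+1}) ∩ W_h^{def}Λ^{k+1}`. -/
theorem stmt17 (n k : ℕ) (hk : k + 2 ≤ n)
    (ι : Type) [Fintype ι] (r : ι → Fin n → ℝ) (hr : ∀ K i, 0 < r K i)
    (V : Submodule ℝ (ι → Form n (k+1))) (V' : Submodule ℝ (ι → Form n (k+2)))
    (hV : ∀ μ ∈ V, ∀ K, μ K ∈ Qs n (k+1))
    (hV' : ∀ η ∈ V', ∀ K, η K ∈ Qs n (k+2))
    (hδ : ∀ η ∈ V', (fun K => codiff n (k+1) (η K)) ∈ V)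
    (ωh : ι → Form n k) (hshape : ∀ K, ωh K ∈ Pm n k)
    (hω : ∀ μ ∈ V, ∑ K : ι,
      (binner n (k+1) (r K) (extd n k (ωh K)) (μ K)
        - binner n k (r K) (ωh K) (codiff n k (μ K))) = 0) :
    (∀ K, extd n k (ωh K) ∈ Pm n (k+1)) ∧
      (∀ η ∈ V', ∑ K : ι,
        (binner n (k+2) (r K) (extd n (k+1) (extd n k (ωh K))) (η K)
          - binner n (k+1) (r K) (extd n k (ωh K)) (codiff n (k+1) (η K))) = 0) ∧
      (∀ K, extd n (k+1) (extd n k (ωh K)) = 0) :=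
  stmt17_general n k ι r V V' hδ ωh hshape hω
end

section
/- Strang-type error estimate: let ω ∈ HΛ^k solve ⟨d^k ω, d^k μ⟩ + ⟨ω, μ⟩ = ⟨f, μ⟩ for all μ ∈ HΛ^k, and let ω_h ∈ W_h^{def}Λ^k solve the discrete problem ⟨d_h^k ω_h, d_h^k μ_h⟩ + ⟨ω_h, μ_h⟩ = ⟨f, μ_h⟩ for all μ_h ∈ W_h^{def}Λ^k. Then the consistency error satisfies, for every ψ_h ∈ V_{h0}^{Q,*}Λ^{k+1} and μ_h ∈ W_h^{def}Λ^k, ⟨d^k ω, d_h^k μ_h⟩ − ⟨δ_{k+1} d^k ω, μ_h⟩ = ⟨d^k ω − ψ_h, d_h^k μ_h⟩ − ⟨δ_{k+1}(d^k ω − ψ_h), μ_h⟩ ≤ ‖d^k ω − ψ_h‖_{δ_{k+1}} ‖μ_h‖_{d_h^k}. -/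
open MvPolynomial Finset MeasureTheory

/-!
Testing the adjoint condition defining `W_h^{def}Λ^k` with `ψ_h` says that the broken pairing
`(u, μ_h) ↦ ⟨u, d_h μ_h⟩ - ⟨δ u, μ_h⟩` vanishes at `u = ψ_h`, so by linearity it does not change
when `d^k ω` is replaced by `d^k ω - ψ_h`. That pairing is the broken `L²` inner product of
`(u, -δ u)` with `(d_h μ_h, μ_h)`, and Cauchy–Schwarz for this positive semidefinite form gives the
bound.
-/

open LinearMap (BilinForm)

namespace LinearMap.BilinForm

variable {R M M' ι : Type*} [CommSemiring R] [AddCommMonoid M] [Module R M]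
  [AddCommMonoid M'] [Module R M']

theorem IsPosSemidef.comp [LE R] {B : BilinForm R M'} (hB : B.IsPosSemidef) (f : M →ₗ[R] M') :
    (B.comp f f).IsPosSemidef :=
  ⟨⟨fun x y => hB.eq (f x) (f y)⟩, ⟨fun x => hB.nonneg (f x)⟩⟩

theorem isPosSemidef_sum [Preorder R] [AddLeftMono R] (s : Finset ι) {B : ι → BilinForm R M}
    (hB : ∀ i ∈ s, (B i).IsPosSemidef) : (∑ i ∈ s, B i).IsPosSemidef :=
  Finset.sum_induction B IsPosSemidef (fun _ _ => IsPosSemidef.add) isPosSemidef_zero hB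

theorem IsPosSemidef.apply_le_sqrt_mul_sqrt {E : Type*} [AddCommGroup E] [Module ℝ E]
    {B : BilinForm ℝ E} (hB : B.IsPosSemidef) (x y : E) :
    B x y ≤ √(B x x) * √(B y y) := by
  rw [← Real.sqrt_mul (hB.nonneg x)]
  exact Real.le_sqrt_of_sq_le (B.apply_sq_le_of_symm hB.nonneg (isSymm_iff.mp hB.isSymm) x y)

end LinearMap.BilinForm

section BoxInnerProduct

variable {n : ℕ}

noncomputable def boxIntegral (r : Fin n → ℝ) : MvPolynomial (Fin n) ℝ →ₗ[ℝ] ℝ where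
  toFun p := ∫ x in Set.Icc (fun i => -(r i)) r, eval x p
  map_add' p q := by
    simp only [map_add]
    exact integral_add ((continuous_eval p).continuousOn.integrableOn_compact isCompact_Icc)
      ((continuous_eval q).continuousOn.integrableOn_compact isCompact_Icc)
  map_smul' c p := by
    simp only [smul_eval, smul_eq_mul, RingHom.id_apply]
    exact integral_const_mul c _

noncomputable def boxInnerForm (r : Fin n → ℝ) : BilinForm ℝ (MvPolynomial (Fin n) ℝ) :=
  (LinearMap.mul ℝ _).compr₂ (boxIntegral r)

theorem isPosSemidef_boxInnerForm (r : Fin n → ℝ) : (boxInnerForm r).IsPosSemidef where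
  eq p q := by simp only [boxInnerForm, LinearMap.compr₂_apply, LinearMap.mul_apply', mul_comm]
  nonneg p := integral_nonneg fun x => by simpa using mul_self_nonneg (eval x p)

noncomputable def binnerForm (n k : ℕ) (r : Fin n → ℝ) : BilinForm ℝ (Form n k) :=
  ∑ s : Idx n k, (boxInnerForm r).comp (LinearMap.proj s) (LinearMap.proj s)

theorem binnerForm_apply (k : ℕ) (r : Fin n → ℝ) (ω η : Form n k) :
    binnerForm n k r ω η = binner n k r ω η := by
  simp [binnerForm, binner, boxInnerForm, boxIntegral]

theorem isPosSemidef_binnerForm (k : ℕ) (r : Fin n → ℝ) : (binnerForm n k r).IsPosSemidef :=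
  BilinForm.isPosSemidef_sum _ fun _ _ => (isPosSemidef_boxInnerForm r).comp _

end BoxInnerProduct

section Broken

variable {n k : ℕ} {ι : Type} [Fintype ι]

/-- Its quadratic form is `‖u‖²_{δ_{k+1}}` at `(u, δ u)` and `‖μ‖²_{d_h^k}` at `(d_h μ, μ)`. -/
noncomputable def brokenProdForm (r : ι → Fin n → ℝ) :
    BilinForm ℝ ((ι → Form n (k+1)) × (ι → Form n k)) :=
  ∑ K, ((binnerForm n (k+1) (r K)).comp (LinearMap.proj K ∘ₗ LinearMap.fst ℝ _ _)
      (LinearMap.proj K ∘ₗ LinearMap.fst ℝ _ _)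
    + (binnerForm n k (r K)).comp (LinearMap.proj K ∘ₗ LinearMap.snd ℝ _ _)
      (LinearMap.proj K ∘ₗ LinearMap.snd ℝ _ _))

theorem brokenProdForm_apply (r : ι → Fin n → ℝ) (u v : (ι → Form n (k+1)) × (ι → Form n k)) :
    brokenProdForm r u v =
      ∑ K, (binner n (k+1) (r K) (u.1 K) (v.1 K) + binner n k (r K) (u.2 K) (v.2 K)) := by
  simp [brokenProdForm, binnerForm_apply]

theorem isPosSemidef_brokenProdForm (r : ι → Fin n → ℝ) :
    (brokenProdForm (k := k) r).IsPosSemidef :=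
  BilinForm.isPosSemidef_sum _ fun _ _ =>
    ((isPosSemidef_binnerForm _ _).comp _).add ((isPosSemidef_binnerForm _ _).comp _)

theorem sum_binner_sub_binner_le (r : ι → Fin n → ℝ) (a c : ι → Form n (k+1))
    (b m : ι → Form n k) :
    ∑ K, (binner n (k+1) (r K) (a K) (c K) - binner n k (r K) (b K) (m K))
      ≤ √(∑ K, (binner n (k+1) (r K) (a K) (a K) + binner n k (r K) (b K) (b K)))
        * √(∑ K, (binner n k (r K) (m K) (m K) + binner n (k+1) (r K) (c K) (c K))) := by
  have h := (isPosSemidef_brokenProdForm r).apply_le_sqrt_mul_sqrt (a, -b) (c, m)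
  simp only [brokenProdForm_apply, Pi.neg_apply, ← binnerForm_apply, map_neg,
    LinearMap.neg_apply, ← sub_eq_add_neg, neg_neg] at h
  simpa only [binnerForm_apply, add_comm (binner n k _ (m _) _)] using h

theorem sum_binner_sub_eq_of_adjoint (r : ι → Fin n → ℝ) (μ : ι → Form n k)
    (ψ u : ι → Form n (k+1))
    (hadj : ∑ K, (binner n (k+1) (r K) (extd n k (μ K)) (ψ K)
      - binner n k (r K) (μ K) (codiff n k (ψ K))) = 0) :
    ∑ K, (binner n (k+1) (r K) (u K) (extd n k (μ K))
        - binner n k (r K) (codiff n k (u K)) (μ K))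
      = ∑ K, (binner n (k+1) (r K) (u K - ψ K) (extd n k (μ K))
        - binner n k (r K) (codiff n k (u K - ψ K)) (μ K)) := by
  rw [← sub_zero (Finset.sum _ _), ← hadj, ← Finset.sum_sub_distrib]
  refine Finset.sum_congr rfl fun K _ => ?_
  simp only [← binnerForm_apply, map_sub, LinearMap.sub_apply,
    (isPosSemidef_binnerForm _ _).eq (extd n k (μ K)), (isPosSemidef_binnerForm _ _).eq (μ K)]
  ring

end Broken

theorem stmt18_general (n k : ℕ)
    (ι : Type) [Fintype ι] (r : ι → Fin n → ℝ)
    (V : Submodule ℝ (ι → Form n (k+1)))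
    (W : Set (ι → Form n k))
    (hW : ∀ μh, μh ∈ W ↔ ((∀ K, μh K ∈ Pm n k) ∧ ∀ ψ ∈ V, ∑ K : ι,
      (binner n (k+1) (r K) (extd n k (μh K)) (ψ K)
        - binner n k (r K) (μh K) (codiff n k (ψ K))) = 0))
    (ω : ι → Form n k) :
    ∀ ψh ∈ V, ∀ μh ∈ W,
      (∑ K : ι, (binner n (k+1) (r K) (extd n k (ω K)) (extd n k (μh K))
          - binner n k (r K) (codiff n k (extd n k (ω K))) (μh K)))
        = (∑ K : ι, (binner n (k+1) (r K) (extd n k (ω K) - ψh K) (extd n k (μh K))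
          - binner n k (r K) (codiff n k (extd n k (ω K) - ψh K)) (μh K))) ∧
      (∑ K : ι, (binner n (k+1) (r K) (extd n k (ω K)) (extd n k (μh K))
          - binner n k (r K) (codiff n k (extd n k (ω K))) (μh K)))
        ≤ Real.sqrt (∑ K : ι, (binner n (k+1) (r K) (extd n k (ω K) - ψh K)
              (extd n k (ω K) - ψh K)
            + binner n k (r K) (codiff n k (extd n k (ω K) - ψh K))
              (codiff n k (extd n k (ω K) - ψh K))))
          * Real.sqrt (∑ K : ι, (binner n k (r K) (μh K) (μh K)
            + binner n (k+1) (r K) (extd n k (μh K)) (extd n k (μh K)))) := by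
  intro ψh hψh μh hμh
  have hconsistency := sum_binner_sub_eq_of_adjoint r μh ψh (fun K => extd n k (ω K))
    (((hW μh).mp hμh).2 ψh hψh)
  exact ⟨hconsistency, hconsistency.trans_le (sum_binner_sub_binner_le r
    (fun K => extd n k (ω K) - ψh K) (fun K => extd n k (μh K))
    (fun K => codiff n k (extd n k (ω K) - ψh K)) μh)⟩

/-- Theorem 4.4, consistency-error bound in the Strang estimate. On a cubical
mesh (cells `ι`, half-widths `r`, cell-centered local coordinates), with `V` the conforming
`Q_1^{*,-}Λ^{k+1}` space, `W = W_h^{def}Λ^k` the set of piecewise Whitney forms satisfying the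
adjoint condition against `V`, `ω` the exact solution (given cellwise; `δ_{k+1}d^k ω + ω = f`),
and `ω_h ∈ W` the discrete solution: for every `ψ_h ∈ V` and `μ_h ∈ W`,
`⟨d^k ω, d_h^k μ_h⟩ - ⟨δ_{k+1} d^k ω, μ_h⟩
  = ⟨d^k ω - ψ_h, d_h^k μ_h⟩ - ⟨δ_{k+1}(d^k ω - ψ_h), μ_h⟩
  ≤ ‖d^k ω - ψ_h‖_{δ_{k+1}} ‖μ_h‖_{d_h^k}`. -/
theorem stmt18 (n k : ℕ) (hk : k + 1 ≤ n)
    (ι : Type) [Fintype ι] (r : ι → Fin n → ℝ) (hr : ∀ K i, 0 < r K i)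
    (V : Submodule ℝ (ι → Form n (k+1)))
    (hV : ∀ μ ∈ V, ∀ K, μ K ∈ Qs n (k+1))
    (W : Set (ι → Form n k))
    (hW : ∀ μh, μh ∈ W ↔ ((∀ K, μh K ∈ Pm n k) ∧ ∀ ψ ∈ V, ∑ K : ι,
      (binner n (k+1) (r K) (extd n k (μh K)) (ψ K)
        - binner n k (r K) (μh K) (codiff n k (ψ K))) = 0))
    (f ω : ι → Form n k)
    (hsol : ∀ K, codiff n k (extd n k (ω K)) + ω K = f K)
    (ωh : ι → Form n k) (hωh : ωh ∈ W)
    (hdisc : ∀ μh ∈ W, ∑ K : ι,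
      (binner n (k+1) (r K) (extd n k (ωh K)) (extd n k (μh K))
        + binner n k (r K) (ωh K) (μh K))
      = ∑ K : ι, binner n k (r K) (f K) (μh K)) :
    ∀ ψh ∈ V, ∀ μh ∈ W,
      (∑ K : ι, (binner n (k+1) (r K) (extd n k (ω K)) (extd n k (μh K))
          - binner n k (r K) (codiff n k (extd n k (ω K))) (μh K)))
        = (∑ K : ι, (binner n (k+1) (r K) (extd n k (ω K) - ψh K) (extd n k (μh K))
          - binner n k (r K) (codiff n k (extd n k (ω K) - ψh K)) (μh K))) ∧
      (∑ K : ι, (binner n (k+1) (r K) (extd n k (ω K)) (extd n k (μh K))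
          - binner n k (r K) (codiff n k (extd n k (ω K))) (μh K)))
        ≤ Real.sqrt (∑ K : ι, (binner n (k+1) (r K) (extd n k (ω K) - ψh K)
              (extd n k (ω K) - ψh K)
            + binner n k (r K) (codiff n k (extd n k (ω K) - ψh K))
              (codiff n k (extd n k (ω K) - ψh K))))
          * Real.sqrt (∑ K : ι, (binner n k (r K) (μh K) (μh K)
            + binner n (k+1) (r K) (extd n k (μh K)) (extd n k (μh K)))) :=
  stmt18_general n k ι r V W hW ω
end
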